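/- arXiv:1906.07618 — 2 statements merged into one kernel-verified Lean document; each statement's English description precedes it below -/
import Mathlib

section
/- Let I = (i_1 < i_2 < ... < i_k) be a strictly increasing sequence of nonnegative integers. Then the k×k determinant det(1/(i_j - g + k + 1 - i)!)_{1≤i,j≤k} (with rows indexed by i = 1,...,k so that the (i,j) entry is 1/(i_j - g + k + 1 - i)! , interpreted as 0 when the argument of the factorial is negative) equals (∏_{1≤j<ℓ≤k} (i_ℓ - i_j)) / (∏_{j=1}^k (i_j - g + k)!), provided i_1 ≥ g - k. -/
/-!
Writing `m_b = i_b - g + k ≥ 0`, the `(a, b)` entry is `1 / (m_b - a)! = (m_b)_a / m_b!`, where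
`(m_b)_a = m_b (m_b - 1) ⋯ (m_b - a + 1)` is the falling factorial; this also covers the zero
entries, since `(m_b)_a = 0` for `a > m_b`. Pulling `1 / m_b!` out of column `b` leaves the matrix
of the monic polynomials `x (x - 1) ⋯ (x - a + 1)` of degree `a` evaluated at the `m_b`, whose
determinant is the Vandermonde determinant `∏_{j < ℓ} (m_ℓ - m_j) = ∏_{j < ℓ} (i_ℓ - i_j)`.
-/

open Finset Matrix Nat

theorem Finset.prod_filter_fst_lt_snd {ι M : Type*} [Fintype ι] [LinearOrder ι]
    [LocallyFiniteOrderTop ι] [CommMonoid M] (f : ι → ι → M) :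
    ∏ p ∈ univ.filter (fun p : ι × ι => p.1 < p.2), f p.1 p.2 = ∏ i, ∏ j ∈ Ioi i, f i j := by
  simp_rw [prod_filter, Fintype.prod_prod_type, ← prod_filter, filter_lt_eq_Ioi]

theorem Nat.descFactorial_div_factorial {K : Type*} [Field K] [CharZero K] (n a : ℕ) :
    (n.descFactorial a : K) / n ! =
      if 0 ≤ (n : ℤ) - a then 1 / (((n : ℤ) - a).toNat ! : K) else 0 := by
  split_ifs with h
  · obtain ⟨d, rfl⟩ : ∃ d, n = d + a := ⟨n - a, by omega⟩
    rw [show ((d + a : ℕ) - a : ℤ).toNat = d by omega,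
      ← factorial_mul_descFactorial (Nat.le_add_left a d), Nat.add_sub_cancel]
    push_cast
    field_simp
  · rw [descFactorial_eq_zero_iff_lt.mpr (by omega), cast_zero, zero_div]

theorem Matrix.det_descFactorial {R : Type*} [CommRing R] {k : ℕ} (m : Fin k → ℕ) :
    det (of fun a b : Fin k => ((m b).descFactorial a : R)) =
      ∏ i, ∏ j ∈ Ioi i, ((m j : R) - m i) := by
  -- `descPochhammer_natDegree` needs a nontrivial ring without zero divisors: compute over `ℤ`.
  have hℤ : det (of fun a b : Fin k => ((m b).descFactorial a : ℤ)) =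
      ∏ i, ∏ j ∈ Ioi i, ((m j : ℤ) - m i) := by
    rw [← det_vandermonde, det_eval_matrixOfPolynomials_eq_det_vandermonde _
      (fun a => descPochhammer ℤ a) (fun a => descPochhammer_natDegree ℤ a)
      (fun a => monic_descPochhammer ℤ a), ← det_transpose]
    simp only [transpose, of_apply, descPochhammer_eval_eq_descFactorial]
  have hR := congrArg (Int.castRingHom R) hℤ
  simp only [RingHom.map_det, map_prod, map_sub, map_natCast] at hR
  rw [← hR]
  congr 1
  ext
  simp

theorem Matrix.det_descFactorial_div_factorial {K : Type*} [Field K] {k : ℕ}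
    (m : Fin k → ℕ) :
    det (of fun a b : Fin k => ((m b).descFactorial a : K) / (m b)!) =
      (∏ i, ∏ j ∈ Ioi i, ((m j : K) - m i)) / ∏ j, ((m j)! : K) := by
  simp_rw [div_eq_inv_mul]
  rw [← det_descFactorial, ← prod_inv_distrib]
  exact det_mul_row _ _

/-- For a strictly increasing sequence `i_1 < ... < i_k` of
nonnegative integers with `i_1 ≥ g - k`, the `k×k` determinant with `(a,b)` entry
`1/(i_b - g + k + 1 - a)!` (rows `a = 1,…,k`; the reciprocal factorial interpreted
as `0` when the argument is negative) equals
`(∏_{j<ℓ} (i_ℓ - i_j)) / (∏_j (i_j - g + k)!)`. -/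
theorem det_reciprocal_factorials (k : ℕ) (hk : 1 ≤ k) (g : ℤ)
    (i : Fin k → ℕ) (hmono : StrictMono i)
    (hfirst : g - k ≤ (i ⟨0, hk⟩ : ℤ)) :
    Matrix.det (Matrix.of fun a b : Fin k =>
      if h : 0 ≤ (i b : ℤ) - g + k + 1 - ((a : ℕ) + 1)
      then (1 : ℚ) / (Nat.factorial ((i b : ℤ) - g + k + 1 - ((a : ℕ) + 1)).toNat)
      else 0) =
    (∏ p ∈ Finset.univ.filter (fun p : Fin k × Fin k => p.1 < p.2),
        (((i p.2 : ℤ) - (i p.1 : ℤ) : ℤ) : ℚ)) /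
      ∏ j : Fin k, (Nat.factorial ((i j : ℤ) - g + k).toNat : ℚ) := by
  set m : Fin k → ℕ := fun j => ((i j : ℤ) - g + k).toNat
  have hm : ∀ j, (m j : ℤ) = i j - g + k := fun j => by
    have : i ⟨0, hk⟩ ≤ i j := hmono.monotone (Fin.mk_le_of_le_val (Nat.zero_le _))
    exact Int.toNat_of_nonneg (by omega)
  trans det (of fun a b : Fin k => ((m b).descFactorial a : ℚ) / (m b)!)
  · congr 1
    ext a b
    rw [of_apply, of_apply, dite_eq_ite, Nat.descFactorial_div_factorial, hm,
      add_sub_add_right_eq_sub]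
  rw [det_descFactorial_div_factorial,
    prod_filter_fst_lt_snd fun a b => (((i b : ℤ) - i a : ℤ) : ℚ)]
  congr 1
  refine prod_congr rfl fun a _ => prod_congr rfl fun b _ => ?_
  rw [← Int.cast_natCast, ← Int.cast_natCast (m a), hm, hm]
  push_cast
  ring
end

section
/- Suppose L is a line bundle on a smooth projective curve C over an algebraically closed field such that the Petri multiplication map μ: H⁰(L) ⊗ H⁰(ω ⊗ L⁻¹) → H⁰(ω) is injective and h⁰(L) ≥ 2, where ω is the canonical bundle of C. Then h¹(L^{⊗2}) = 0. -/
open scoped TensorProduct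


/-- **Petri condition kills `h¹(L²)`.** Model the spaces of sections
`H⁰(L)` and `H⁰(ω ⊗ L⁻¹)` as finite-dimensional `K`-subspaces `V`, `W` of the function
field `F = K(C)` (a field extension of the base field `K`), so that the Petri
multiplication map `H⁰(L) ⊗ H⁰(ω⊗L⁻¹) → H⁰(ω)` is the restriction of multiplication
in `F`, namely `Submodule.mulMap V W : V ⊗[K] W → F`.  By Serre duality,
`h¹(L^{⊗2}) = dim Hom(L, ω⊗L⁻¹)`, and any nonzero element of `Hom(L, ω⊗L⁻¹)` is
multiplication by a nonzero rational function `f ∈ F` with `f·V ⊆ W`.  The claim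
`h¹(L^{⊗2}) = 0` therefore reads: if the Petri map is injective and
`dim H⁰(L) = dim V ≥ 2`, then the only `f ∈ F` with `f·V ⊆ W` is `f = 0`. -/
theorem petri_injective_implies_h1_of_square_zero
    (K F : Type*) [Field K] [Field F] [Algebra K F]
    (V W : Submodule K F) (hV : 2 ≤ Module.finrank K V)
    (hPetri : Function.Injective (Submodule.mulMap V W)) :
    ∀ f : F, (∀ v ∈ V, f * v ∈ W) → f = 0 := by
  intro f hf
  by_contra hf0
  -- pick a nonzero vector of V
  have hVnt : Nontrivial V := by
    refine Module.nontrivial_of_finrank_pos (R := K) ?_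
    omega
  obtain ⟨x, hx⟩ := exists_ne (0 : V)
  -- and a second, linearly independent one
  obtain ⟨y, hxy⟩ := exists_linearIndependent_pair_of_one_lt_finrank
    (by omega : 1 < Module.finrank K V) hx
  -- build a functional φ on V with φ x = 0, φ y = 1
  have hy : (Submodule.span K {x}).mkQ y ≠ 0 := by
    rw [Submodule.mkQ_apply, ne_eq, Submodule.Quotient.mk_eq_zero,
      Submodule.mem_span_singleton]
    rintro ⟨a, rfl⟩
    have := hxy
    rw [LinearIndependent.pair_iff] at this
    have h2 := this a (-1) (by simp)
    simpa using h2.2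
  obtain ⟨g, hg⟩ : ∃ g : Module.Dual K (V ⧸ Submodule.span K {x}),
      g ((Submodule.span K {x}).mkQ y) ≠ 0 := by
    by_contra h
    push_neg at h
    exact hy ((Module.forall_dual_apply_eq_zero_iff K _).mp h)
  set c := g ((Submodule.span K {x}).mkQ y) with hc
  let φ : Module.Dual K V := c⁻¹ • (g ∘ₗ (Submodule.span K {x}).mkQ)
  have hφx : φ x = 0 := by
    simp [φ, Submodule.mkQ_apply,
      (Submodule.Quotient.mk_eq_zero _).mpr (Submodule.mem_span_singleton_self x)]
  have hφy : φ y = 1 := by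
    simp only [φ, LinearMap.smul_apply, LinearMap.comp_apply, smul_eq_mul]
    exact inv_mul_cancel₀ hg
  -- the two products
  set w1 : W := ⟨f * (x : F), hf _ x.2⟩ with hw1
  set w2 : W := ⟨f * (y : F), hf _ y.2⟩ with hw2
  -- the key tensor
  set t : (V : Type _) ⊗[K] (W : Type _) := x ⊗ₜ w2 - y ⊗ₜ w1 with ht
  have hmul : Submodule.mulMap V W t = 0 := by
    simp only [ht, map_sub, Submodule.mulMap_tmul, hw1, hw2]
    ring
  have ht0 : t = 0 := hPetri (by rw [hmul, map_zero])
  -- apply φ ⊗ id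
  let ψ : (V : Type _) ⊗[K] (W : Type _) →ₗ[K] W :=
    TensorProduct.lift ((LinearMap.lsmul K W) ∘ₗ φ)
  have := congrArg ψ ht0
  simp only [ht, map_sub, map_zero, TensorProduct.lift.tmul, LinearMap.comp_apply,
    LinearMap.lsmul_apply, hφx, hφy, zero_smul, one_smul, zero_sub, neg_eq_zero, ψ] at this
  -- so w1 = 0, i.e. f * x = 0 with f ≠ 0 and x ≠ 0: contradiction
  have : f * (x : F) = 0 := by
    have := congrArg (Subtype.val) this
    simpa [hw1] using this
  rcases mul_eq_zero.mp this with h | h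
  · exact hf0 h
  · exact hx (Subtype.ext h)
end
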